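/- Let (∂ : M →* L) and (∂' : M' →* L) be crossed modules of groups over the same group L and let f : M →* M' be a surjective morphism of L-crossed modules such that L acts trivially on ker f, i.e. l • k = k for all l : L and k ∈ MonoidHom.ker f. Form the semidirect product M ⋊[φ] L where φ : L →* MulAut M is the homomorphism determined by the action (MulDistribMulAction.toMulAut). Then the image of ker f under the canonical inclusion SemidirectProduct.inl : M →* M ⋊[φ] L is contained in the center: for every k ∈ MonoidHom.ker f, SemidirectProduct.inl k ∈ Subgroup.center (M ⋊[φ] L). -/

import Mathlib

theorem SemidirectProduct.inl_mem_center {N G : Type*} [Group N] [Group G] {φ : G →* MulAut N}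
    {n : N} (hn : n ∈ Subgroup.center N) (hfix : ∀ g, φ g n = n) :
    (inl n : N ⋊[φ] G) ∈ Subgroup.center (N ⋊[φ] G) := by
  rw [Subgroup.mem_center_iff]
  intro x
  ext
  · simp [hfix, Subgroup.mem_center_iff.mp hn x.left]
  · simp

theorem MonoidHom.ker_le_center_of_peiffer {L M : Type*} [Monoid L] [Group M] [MulAction L M]
    {d : M →* L} (hpeiffer : ∀ m m' : M, d m • m' = m * m' * m⁻¹) :
    d.ker ≤ Subgroup.center M := by
  intro k hk
  rw [Subgroup.mem_center_iff]
  intro m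
  have h := hpeiffer k m
  rw [mem_ker.mp hk, one_smul] at h
  exact (mul_inv_eq_iff_eq_mul.mp h.symm).symm

theorem inl_ker_le_center_semidirectProduct_general
    {L M M' : Type*} [Group L] [Group M] [Group M']
    [MulDistribMulAction L M]
    (d : M →* L) (d' : M' →* L)
    (hpeiffer : ∀ (m m' : M), (d m) • m' = m * m' * m⁻¹)
    (f : M →* M')
    (hfd : ∀ m : M, d' (f m) = d m)
    (htriv : ∀ (l : L), ∀ k ∈ MonoidHom.ker f, l • k = k) :
    ∀ k ∈ MonoidHom.ker f,
      (SemidirectProduct.inl k : M ⋊[MulDistribMulAction.toMulAut L M] L)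
        ∈ Subgroup.center (M ⋊[MulDistribMulAction.toMulAut L M] L) := by
  intro k hk
  have hdk : k ∈ d.ker := by rw [MonoidHom.mem_ker, ← hfd, MonoidHom.mem_ker.mp hk, map_one]
  exact SemidirectProduct.inl_mem_center (d.ker_le_center_of_peiffer hpeiffer hdk)
    fun l => htriv l k hk

/-- For a central extension `f` of `L`-crossed modules of groups
(a surjective morphism of `L`-crossed modules on whose kernel `L` acts
trivially), the image of `ker f` in the semidirect product `M ⋊ L` is central. -/
theorem inl_ker_le_center_semidirectProduct
    {L M M' : Type*} [Group L] [Group M] [Group M']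
    [MulDistribMulAction L M] [MulDistribMulAction L M']
    (d : M →* L) (d' : M' →* L)
    (hequiv : ∀ (l : L) (m : M), d (l • m) = l * d m * l⁻¹)
    (hpeiffer : ∀ (m m' : M), (d m) • m' = m * m' * m⁻¹)
    (hequiv' : ∀ (l : L) (m : M'), d' (l • m) = l * d' m * l⁻¹)
    (hpeiffer' : ∀ (m m' : M'), (d' m) • m' = m * m' * m⁻¹)
    (f : M →* M') (hfsurj : Function.Surjective f)
    (hfd : ∀ m : M, d' (f m) = d m)
    (hfequiv : ∀ (l : L) (m : M), f (l • m) = l • f m)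
    (htriv : ∀ (l : L), ∀ k ∈ MonoidHom.ker f, l • k = k) :
    ∀ k ∈ MonoidHom.ker f,
      (SemidirectProduct.inl k : M ⋊[MulDistribMulAction.toMulAut L M] L)
        ∈ Subgroup.center (M ⋊[MulDistribMulAction.toMulAut L M] L) :=
  inl_ker_le_center_semidirectProduct_general d d' hpeiffer f hfd htriv
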